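/- arXiv:1507.01137 — 2 statements merged into one kernel-verified Lean document; each statement's English description precedes it below -/
import Mathlib

section
/- For the spread set of Proposition on the solvable case, for each (s,v) ∈ ℝ² \ {(0,0)}, the matrix [[v, −s³/3],[s, s² + v]] has determinant v² + s²v + s⁴/3 > 0; in particular the difference of two distinct such matrices is invertible. -/
/-!
Writing `d = s₁ - s₂`, the determinant of `M(s₁,v₁) - M(s₂,v₂)` completes to the square
`(v₁ - v₂ + d (s₁ + s₂) / 2)² + d⁴ / 12`, which vanishes only when `d = 0` and `v₁ = v₂`.
Since `M(0,0) = 0`, positivity of `det M(s,v)` is the case `(s₂,v₂) = (0,0)`.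
-/

open Matrix

noncomputable def spreadMatrix (s v : ℝ) : Matrix (Fin 2) (Fin 2) ℝ :=
  !![v, -s^3/3; s, s^2 + v]

@[simp]
lemma spreadMatrix_zero : spreadMatrix 0 0 = 0 := by
  ext i j
  fin_cases i <;> fin_cases j <;> simp [spreadMatrix]

lemma det_spreadMatrix (s v : ℝ) : (spreadMatrix s v).det = v^2 + s^2 * v + s^4/3 := by
  simp only [spreadMatrix, det_fin_two_of]
  ring

lemma det_spreadMatrix_sub (s₁ v₁ s₂ v₂ : ℝ) :
    (spreadMatrix s₁ v₁ - spreadMatrix s₂ v₂).det =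
      (v₁ - v₂ + (s₁ - s₂) * (s₁ + s₂) / 2) ^ 2 + (s₁ - s₂) ^ 4 / 12 := by
  simp only [spreadMatrix, of_sub_of, sub_cons, head_cons, tail_cons, sub_self, zero_empty,
    det_fin_two, of_apply, cons_val', cons_val_zero, cons_val_fin_one, cons_val_one]
  ring

lemma det_spreadMatrix_sub_pos {s₁ v₁ s₂ v₂ : ℝ} (h : (s₁, v₁) ≠ (s₂, v₂)) :
    0 < (spreadMatrix s₁ v₁ - spreadMatrix s₂ v₂).det := by
  rw [det_spreadMatrix_sub]
  rcases eq_or_ne s₁ s₂ with rfl | hs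
  · have hv : v₁ - v₂ ≠ 0 := sub_ne_zero.2 fun hv => h (by rw [hv])
    simpa using even_two.pow_pos hv
  · have : 0 < (s₁ - s₂) ^ 4 := (even_two_mul 2).pow_pos (sub_ne_zero.2 hs)
    positivity

theorem solvable_spread_det (s v : ℝ) :
    (!![v, -s^3/3; s, s^2 + v] : Matrix (Fin 2) (Fin 2) ℝ).det
        = v^2 + s^2 * v + s^4/3 ∧
    ((s, v) ≠ (0, 0) → 0 < v^2 + s^2 * v + s^4/3) ∧
    (∀ s₁ v₁ s₂ v₂ : ℝ, (s₁, v₁) ≠ (s₂, v₂) →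
      IsUnit ((!![v₁, -s₁^3/3; s₁, s₁^2 + v₁] : Matrix (Fin 2) (Fin 2) ℝ) -
              !![v₂, -s₂^3/3; s₂, s₂^2 + v₂])) := by
  refine ⟨det_spreadMatrix s v, fun h => ?_, fun s₁ v₁ s₂ v₂ h => ?_⟩
  · simpa [← det_spreadMatrix] using det_spreadMatrix_sub_pos h
  · exact (isUnit_iff_isUnit_det _).2 (det_spreadMatrix_sub_pos h).ne'.isUnit
end

section
/- If a loop L has a group G generated by its left translations which is simple (as an abstract group), then L is a simple loop, i.e. its only normal subloops are {1} and L. -/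
structure LoopStr (L : Type*) where
  mul : L → L → L
  one : L
  one_mul : ∀ x, mul one x = x
  mul_one : ∀ x, mul x one = x
  leftBij : ∀ a, Function.Bijective (mul a)
  rightBij : ∀ a, Function.Bijective (fun x => mul x a)

/-- `N` is a normal subloop of the loop `S`. -/
def IsNormalSubloop {L : Type*} (S : LoopStr L) (N : Set L) : Prop :=
  S.one ∈ N ∧
  (∀ a ∈ N, ∀ b ∈ N, ∃ y ∈ N, S.mul a y = b) ∧
  (∀ a ∈ N, ∀ b ∈ N, ∃ x ∈ N, S.mul x a = b) ∧
  (∀ x : L, S.mul x '' N = (fun n => S.mul n x) '' N) ∧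
  (∀ x y : L, (fun p => S.mul p y) '' (S.mul x '' N) =
      S.mul x '' ((fun n => S.mul n y) '' N)) ∧
  (∀ x y : L, (fun p => S.mul p y) '' ((fun n => S.mul n x) '' N) =
      (fun n => S.mul n (S.mul x y)) '' N)

/-! The group `G` permutes the left cosets `xN` of a normal subloop, `g(xN) = (gx)N`, so the
kernel `K` of its action on cosets is a normal subgroup of `G`. Each `λ_n` with `n ∈ N` lies
in `K`, so `K = ⊥` forces `N = {1}`; if `K = ⊤` then every `λ_a` fixes the coset `N`, so
`a ∈ N`. -/

open scoped Pointwise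

theorem MulAction.normal_iInf_stabilizer_of_smul_eq {G α : Type*} [Group G] [MulAction G α]
    {B : α → Set α} (hB : ∀ (g : G) (x : α), g • B x = B (g • x)) :
    (⨅ x, stabilizer G (B x)).Normal := by
  refine ⟨fun k hk g => ?_⟩
  simp only [Subgroup.mem_iInf, mem_stabilizer_iff] at hk ⊢
  intro x
  calc (g * k * g⁻¹) • B x = g • k • B (g⁻¹ • x) := by rw [mul_smul, mul_smul, hB]
    _ = B x := by rw [hk, hB, smul_inv_smul]

def Equiv.Perm.equivariantSubgroup {α : Type*} (B : α → Set α) : Subgroup (Equiv.Perm α) where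
  carrier := {g | ∀ x, g '' B x = B (g x)}
  one_mem' x := by simp
  mul_mem' {g h} hg hh x := by
    rw [Equiv.Perm.coe_mul, Set.image_comp, hh, hg]
    rfl
  inv_mem' {g} hg x := by
    calc (g⁻¹ : Equiv.Perm α) '' B x = g.symm '' (g '' B (g.symm x)) := by
          rw [hg, Equiv.apply_symm_apply]; rfl
      _ = B (g⁻¹ x) := Equiv.symm_image_image g _

namespace LoopStr

variable {L : Type*} (S : LoopStr L)

noncomputable def leftTranslation (a : L) : Equiv.Perm L :=
  Equiv.ofBijective (S.mul a) (S.leftBij a)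

@[simp]
theorem leftTranslation_apply (a x : L) : S.leftTranslation a x = S.mul a x := rfl

theorem image_one_mul (N : Set L) : S.mul S.one '' N = N := by
  rw [show S.mul S.one = id from funext S.one_mul, Set.image_id]

end LoopStr

namespace IsNormalSubloop

variable {L : Type*} {S : LoopStr L} {N : Set L}

theorem one_mem (hN : IsNormalSubloop S N) : S.one ∈ N := hN.1

theorem leftCoset_eq_rightCoset (hN : IsNormalSubloop S N) (x : L) :
    S.mul x '' N = (fun n => S.mul n x) '' N := hN.2.2.2.1 x

theorem image_mul_right_leftCoset (hN : IsNormalSubloop S N) (x y : L) :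
    (fun p => S.mul p y) '' (S.mul x '' N) = S.mul x '' ((fun n => S.mul n y) '' N) :=
  hN.2.2.2.2.1 x y

theorem image_mul_right_rightCoset (hN : IsNormalSubloop S N) (x y : L) :
    (fun p => S.mul p y) '' ((fun n => S.mul n x) '' N) = (fun n => S.mul n (S.mul x y)) '' N :=
  hN.2.2.2.2.2 x y

theorem mem_leftCoset_self (hN : IsNormalSubloop S N) (x : L) : x ∈ S.mul x '' N :=
  ⟨S.one, hN.one_mem, S.mul_one x⟩

theorem mem_of_leftCoset_eq (hN : IsNormalSubloop S N) {a : L} (h : S.mul a '' N = N) : a ∈ N :=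
  h ▸ hN.mem_leftCoset_self a

theorem mul_left_mem_leftCoset (hN : IsNormalSubloop S N) {n : L} (hn : n ∈ N) (x : L) :
    S.mul n x ∈ S.mul x '' N := by
  rw [hN.leftCoset_eq_rightCoset x]
  exact ⟨n, hn, rfl⟩

theorem image_mul_right_eq_self (hN : IsNormalSubloop S N) {n : L} (hn : n ∈ N) :
    (fun m => S.mul m n) '' N = N := by
  obtain ⟨hone, hleft, hright, -, -, hassoc⟩ := hN
  -- `(Nn)y = N(ny) = N` for the `y ∈ N` with `ny = 1`; right division by `y` in `N`
  -- then gives `Nn ⊆ N`.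
  obtain ⟨y, hy, hny⟩ := hleft n hn S.one hone
  have hNny : (fun p => S.mul p y) '' ((fun m => S.mul m n) '' N) = N := by
    rw [hassoc n y, hny, show (fun m => S.mul m S.one) = id from funext S.mul_one, Set.image_id]
  refine Set.Subset.antisymm (fun z hz => ?_) (fun b hb => hright n hn b hb)
  obtain ⟨w, hw, hwy⟩ := hright y hy (S.mul z y) (hNny ▸ Set.mem_image_of_mem _ hz)
  exact (S.rightBij y).1 hwy ▸ hw

theorem leftCoset_eq_of_mem (hN : IsNormalSubloop S N) {x y : L} (hy : y ∈ S.mul x '' N) :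
    S.mul y '' N = S.mul x '' N := by
  obtain ⟨n, hn, rfl⟩ := hy
  calc S.mul (S.mul x n) '' N
      = (fun m => S.mul m (S.mul x n)) '' N := hN.leftCoset_eq_rightCoset _
    _ = (fun p => S.mul p n) '' (S.mul x '' N) := by
      rw [← hN.image_mul_right_rightCoset, hN.leftCoset_eq_rightCoset]
    _ = S.mul x '' ((fun m => S.mul m n) '' N) := hN.image_mul_right_leftCoset x n
    _ = S.mul x '' N := by rw [hN.image_mul_right_eq_self hn]

theorem image_mul_left_leftCoset (hN : IsNormalSubloop S N) (a x : L) :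
    S.mul a '' (S.mul x '' N) = S.mul (S.mul a x) '' N := by
  calc S.mul a '' (S.mul x '' N)
      = (fun p => S.mul p x) '' (S.mul a '' N) := by
        rw [hN.leftCoset_eq_rightCoset x, hN.image_mul_right_leftCoset]
    _ = S.mul (S.mul a x) '' N := by
      rw [hN.leftCoset_eq_rightCoset, hN.image_mul_right_rightCoset, hN.leftCoset_eq_rightCoset]

theorem image_leftCoset_of_mem_closure (hN : IsNormalSubloop S N) {g : Equiv.Perm L}
    (hg : g ∈ Subgroup.closure (Set.range S.leftTranslation)) (x : L) :
    g '' (S.mul x '' N) = S.mul (g x) '' N := by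
  refine (Subgroup.closure_le (Equiv.Perm.equivariantSubgroup fun x => S.mul x '' N)).2 ?_ hg x
  rintro _ ⟨a, rfl⟩ y
  exact hN.image_mul_left_leftCoset a y

end IsNormalSubloop

theorem simple_loop_of_simple_leftTranslationGroup {L : Type*} (S : LoopStr L)
    (G : Subgroup (Equiv.Perm L))
    (hG : G = Subgroup.closure
      (Set.range fun a => Equiv.ofBijective (S.mul a) (S.leftBij a)))
    (hsimple : IsSimpleGroup G) :
    ∀ N : Set L, IsNormalSubloop S N → N = {S.one} ∨ N = Set.univ := by
  intro N hN
  let K : Subgroup G := ⨅ x, MulAction.stabilizer G (S.mul x '' N)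
  have hequiv : ∀ (g : G) (x : L), g • S.mul x '' N = S.mul (g • x) '' N := fun g x =>
    hN.image_leftCoset_of_mem_closure (hG ▸ g.2) x
  have translation_mem (a : L) : S.leftTranslation a ∈ G := by
    rw [hG]; exact Subgroup.subset_closure ⟨a, rfl⟩
  have translation_mem_K_iff (a : L) : (⟨_, translation_mem a⟩ : G) ∈ K ↔
      ∀ x, S.mul (S.mul a x) '' N = S.mul x '' N := by
    simp only [K, Subgroup.mem_iInf, MulAction.mem_stabilizer_iff, hequiv]
    rfl
  rcases hsimple.eq_bot_or_eq_top_of_normal K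
    (MulAction.normal_iInf_stabilizer_of_smul_eq hequiv) with hbot | htop
  · refine Or.inl (Set.eq_singleton_iff_unique_mem.2 ⟨hN.one_mem, fun n hn => ?_⟩)
    have hnK := (translation_mem_K_iff n).2 fun x =>
      hN.leftCoset_eq_of_mem (hN.mul_left_mem_leftCoset hn x)
    rw [hbot, Subgroup.mem_bot] at hnK
    simpa only [LoopStr.leftTranslation_apply, S.mul_one, OneMemClass.coe_one,
      Equiv.Perm.one_apply] using
      congrArg (fun g : G => (g : Equiv.Perm L) S.one) hnK
  · refine Or.inr (Set.eq_univ_of_forall fun a => hN.mem_of_leftCoset_eq ?_)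
    simpa only [S.mul_one, S.image_one_mul] using
      (translation_mem_K_iff a).1 (htop ▸ Subgroup.mem_top _) S.one
end
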